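/- arXiv:2202.08984 — 3 statements merged into one kernel-verified Lean document; each statement's English description precedes it below -/
import Mathlib

section
/- For all nonnegative integers n, (xD)^n applied to x/(1-x^2) equals x B_n(x^2)/(1-x^2)^{n+1}, where D = d/dx and B_n is the n-th type B Eulerian polynomial; equivalently, sum_{k>=0} (2k+1)^n x^{2k+1} = x B_n(x^2)/(1-x^2)^{n+1} as formal power series. -/
/-!
With `Sₙ = ∑_{m odd} mⁿ Xᵐ` one has `Sₙ₊₁ = X Sₙ'` and `(1 - X²) S₀ = X`. Multiplying by
`(1 - X²)ⁿ⁺²` conjugates `X d/dX` into `f ↦ (1 - X²) X f' + 2(n+1) X² f` acting on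
`f = (1 - X²)ⁿ⁺¹ Sₙ`, and the defining recursion of `Bₙ` says exactly that this operator sends
`X Bₙ(X²)` to `X Bₙ₊₁(X²)`.
-/

open Polynomial PowerSeries

/-- Type B Eulerian polynomials. -/
noncomputable def eulerianB : ℕ → Polynomial ℚ
  | 0 => 1
  | n + 1 =>
      (Polynomial.C (2 * ((n : ℚ) + 1)) * Polynomial.X + 1 - Polynomial.X) * eulerianB n +
        2 * Polynomial.X * (1 - Polynomial.X) * derivative (eulerianB n)

namespace PowerSeries

variable {R : Type*}

noncomputable def oddPowers [Semiring R] (n : ℕ) : R⟦X⟧ :=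
  mk fun m => if Odd m then (m : R) ^ n else 0

theorem oddPowers_succ [CommSemiring R] (n : ℕ) :
    oddPowers (n + 1) = (X : R⟦X⟧) * d⁄dX R (oddPowers n) := by
  ext (_ | m)
  · simp [oddPowers]
  · rw [coeff_succ_X_mul, coeff_derivative]
    simp only [oddPowers, coeff_mk, Nat.odd_add_one, Nat.cast_add_one]
    split_ifs <;> ring

theorem one_sub_X_sq_mul_oddPowers_zero [CommRing R] :
    (1 - X ^ 2 : R⟦X⟧) * oddPowers 0 = X := by
  ext (_ | _ | m)
  · simp [oddPowers]
  · simp [oddPowers, sub_mul, pow_two, mul_assoc, coeff_succ_X_mul]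
  · simp [oddPowers, sub_mul, coeff_X_pow_mul', coeff_X, Nat.odd_add_one]

theorem one_sub_X_sq_pow_mul_X_mul_derivative [CommRing R] (n : ℕ) (g : R⟦X⟧) :
    (1 - X ^ 2 : R⟦X⟧) ^ (n + 2) * (X * d⁄dX R g) =
      (1 - X ^ 2) * (X * d⁄dX R ((1 - X ^ 2) ^ (n + 1) * g)) +
        (2 * (n + 1) : R⟦X⟧) * X ^ 2 * ((1 - X ^ 2) ^ (n + 1) * g) := by
  simp only [Derivation.leibniz, Derivation.leibniz_pow, map_sub, Derivation.map_one_eq_zero,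
    derivative_X, smul_eq_mul, nsmul_eq_mul, Nat.add_sub_cancel, Nat.cast_add,
    Nat.cast_one, Nat.cast_ofNat]
  ring

end PowerSeries

namespace Polynomial

theorem X_mul_eulerianB_succ_comp_X_sq (n : ℕ) :
    (X : ℚ[X]) * (eulerianB (n + 1)).comp (X ^ 2) =
      (1 - X ^ 2) * (X * derivative (X * (eulerianB n).comp (X ^ 2))) +
        (2 * (n + 1) : ℚ[X]) * X ^ 2 * (X * (eulerianB n).comp (X ^ 2)) := by
  simp only [eulerianB, add_comp, sub_comp, mul_comp, C_comp, X_comp, one_comp, ofNat_comp,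
    derivative_mul, derivative_comp, derivative_X, derivative_X_pow]
  simp only [map_add, map_mul, C_ofNat, map_natCast, map_one]
  ring

end Polynomial

theorem stmt2 (n : ℕ) :
    (1 - (PowerSeries.X : PowerSeries ℚ) ^ 2) ^ (n + 1) *
        PowerSeries.mk (fun m => if Odd m then (m : ℚ) ^ n else 0) =
      PowerSeries.X * (((eulerianB n).comp (Polynomial.X ^ 2) : Polynomial ℚ) : PowerSeries ℚ) := by
  change _ * oddPowers n = _
  induction n with
  | zero => simpa [eulerianB] using one_sub_X_sq_mul_oddPowers_zero
  | succ n ih =>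
    have recursion := congrArg coeToPowerSeries.ringHom (X_mul_eulerianB_succ_comp_X_sq n)
    simp only [map_add, map_sub, map_mul, map_pow, map_one, map_ofNat, map_natCast,
      coeToPowerSeries.ringHom_apply, Polynomial.coe_mul, Polynomial.coe_X,
      ← derivative_coe] at recursion
    rw [oddPowers_succ, one_sub_X_sq_pow_mul_X_mul_derivative, ih, recursion]
end

section
/- For all n >= 2, N(D_n, x^2) = (1+x)^{2n} + sum_{i=1}^n ( binom(n,i) binom(2i,i) - n C_{i-1} binom(n-2,i-2) ) (-x)^i (1+x)^{2n-2i}, and the coefficients binom(n,i) binom(2i,i) - n C_{i-1} binom(n-2,i-2) are nonnegative for 1 <= i <= n; hence N(D_n,x^2) is alternatingly gamma-positive. -/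
open Polynomial Finset

/-- The type A Narayana polynomial `N(A_n, x)`. -/
noncomputable def narayanaA (n : ℕ) : Polynomial ℚ :=
  ∑ k ∈ Finset.range (n + 1),
    C ((1 / ((n : ℚ) + 1)) * ((n + 1).choose (k + 1)) * ((n + 1).choose k)) * X ^ k

/-- The type B Narayana polynomial `N(B_n, x)`. -/
noncomputable def narayanaB (n : ℕ) : Polynomial ℚ :=
  ∑ k ∈ Finset.range (n + 1), C ((n.choose k : ℚ) ^ 2) * X ^ k

/-- The type D Narayana polynomial `N(D_n, x) = N(B_n, x) - n x N(A_{n-2}, x)`. -/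
noncomputable def narayanaD (n : ℕ) : Polynomial ℚ :=
  narayanaB n - C (n : ℚ) * X * narayanaA (n - 2)

/-- The alternating γ-coefficients of `N(D_n, x²)`; here `binom(n-2, i-2) = 0` when `i < 2`. -/
noncomputable def coefD (n i : ℕ) : ℚ :=
  (n.choose i : ℚ) * ((2 * i).choose i) -
    (if 2 ≤ i then (n : ℚ) * (catalan (i - 1)) * ((n - 2).choose (i - 2)) else 0)

/-!
The sum `∑ₖ C(N,k) C(N,s-k) tᵏ` is the coefficient of `Yˢ` in `((1 + tY)(1 + Y))ᴺ`. For `t = x²`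
one has `(1 + x²Y)(1 + Y) = (1 - xY)² + (1 + x)² Y`, and expanding the `N`-th power of the right-hand
side binomially turns that coefficient into a sum of terms `(-x)ʲ (1 + x)^(2N-2j)`. With `s = N = n`
this is the γ-expansion of `N(B_n, x²)`, and with `s = m`, `N = m + 1` it is that of
`(m + 1) N(A_m, x²)`, namely `N(A_m, x²) = ∑ⱼ C(m,j) C_{j+1} (-x)ʲ (1 + x)^(2m-2j)`.
Subtracting gives the expansion of `N(D_n, x²)`. Nonnegativity of its coefficients comes down to
`(m + 2) C(m,a) = C(m+2,a+2) (a+1)(a+2)/(m+1)`, `(a + 2) C_{a+1} = C(2a+2,a+1) ≤ C(2a+4,a+2)`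
and `a + 1 ≤ m + 1`.
-/

section
variable {R : Type*} [CommRing R]

theorem Polynomial.coeff_one_add_C_mul_X_pow (a : R) (N k : ℕ) :
    ((1 + C a * X) ^ N).coeff k = N.choose k * a ^ k := by
  rw [add_comm, add_pow, finsetSum_coeff]
  simp only [one_pow, mul_one, mul_pow, ← C_pow, mul_comm _ ((N.choose _ : R[X])), ← mul_assoc]
  simp only [← C_eq_natCast, ← C_mul, coeff_C_mul_X_pow]
  rw [sum_ite_eq]
  split_ifs with h
  · rfl
  · rw [Nat.choose_eq_zero_of_lt (by simpa using h), Nat.cast_zero, zero_mul]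

theorem Polynomial.coeff_add_C_mul_X_pow (p : R[X]) (b : R) (N s : ℕ) :
    ((p + C b * X) ^ N).coeff s = ∑ j ∈ range (N + 1),
      if N - j ≤ s then N.choose j * b ^ (N - j) * (p ^ j).coeff (s - (N - j)) else 0 := by
  rw [add_pow, finsetSum_coeff]
  refine sum_congr rfl fun j _ => ?_
  have : p ^ j * (C b * X) ^ (N - j) * (N.choose j : R[X]) =
      C (N.choose j * b ^ (N - j)) * (X ^ (N - j) * p ^ j) := by
    simp only [map_mul, map_pow, map_natCast]
    ring
  rw [this, coeff_C_mul, coeff_X_pow_mul']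
  split_ifs <;> simp

theorem one_add_C_sq_mul_X_mul_one_add_X (a : R) :
    (1 + C (a ^ 2) * X) * (1 + X) = (1 + C (-a) * X) ^ 2 + C ((1 + a) ^ 2) * X := by
  simp only [map_pow, map_neg, map_add, map_one]
  ring

theorem sum_choose_mul_choose_mul_sq_pow (a : R) (N s : ℕ) :
    ∑ k ∈ range (s + 1), (N.choose k * N.choose (s - k) : R) * (a ^ 2) ^ k =
      ∑ j ∈ range (N + 1), if N - j ≤ s then
        N.choose j * ((2 * j).choose (s - (N - j)) * (-a) ^ (s - (N - j))) *
          (1 + a) ^ (2 * (N - j))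
        else 0 := calc
  _ = (((1 + C (a ^ 2) * X) * (1 + X)) ^ N).coeff s := by
    rw [mul_pow, coeff_mul, Nat.sum_antidiagonal_eq_sum_range_succ_mk]
    refine sum_congr rfl fun k _ => ?_
    rw [coeff_one_add_C_mul_X_pow, coeff_one_add_X_pow]
    ring
  _ = _ := by
    rw [one_add_C_sq_mul_X_mul_one_add_X, coeff_add_C_mul_X_pow]
    refine sum_congr rfl fun j _ => ?_
    rw [← pow_mul, ← pow_mul (1 + C (-a) * X), coeff_one_add_C_mul_X_pow]
    split_ifs <;> ring
end

theorem succ_mul_catalan_succ_eq_choose (j : ℕ) :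
    (j + 1) * catalan (j + 1) = (2 * (j + 1)).choose j := by
  refine Nat.eq_of_mul_eq_mul_left (Nat.succ_pos (j + 1)) ?_
  have h := Nat.choose_succ_right_eq (2 * (j + 1)) j
  rw [← Nat.centralBinom_eq_two_mul_choose, ← succ_mul_catalan_eq_centralBinom,
    show 2 * (j + 1) - j = j + 2 by omega] at h
  linarith

theorem choose_succ_succ_mul_choose_eq_mul_catalan (m j : ℕ) :
    (m + 1).choose (j + 1) * (2 * (j + 1)).choose j = (m + 1) * (m.choose j * catalan (j + 1)) := by
  rw [← succ_mul_catalan_succ_eq_choose]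
  linear_combination catalan (j + 1) * (Nat.add_one_mul_choose_eq m j).symm

theorem narayanaB_comp_X_sq (n : ℕ) :
    (narayanaB n).comp (X ^ 2) = ∑ i ∈ range (n + 1),
      C ((n.choose i : ℚ) * (2 * i).choose i) * (-X) ^ i * (1 + X) ^ (2 * n - 2 * i) := calc
  _ = ∑ k ∈ range (n + 1), (n.choose k * n.choose (n - k) : ℚ[X]) * ((X : ℚ[X]) ^ 2) ^ k := by
    rw [narayanaB, Polynomial.sum_comp]
    refine sum_congr rfl fun k hk => ?_
    rw [Nat.choose_symm (Nat.le_of_lt_succ (mem_range.mp hk))]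
    simp [sq]
  _ = _ := by
    rw [sum_choose_mul_choose_mul_sq_pow]
    refine sum_congr rfl fun i hi => ?_
    have hi : i ≤ n := Nat.le_of_lt_succ (mem_range.mp hi)
    rw [if_pos (Nat.sub_le n i), Nat.sub_sub_self hi, Nat.mul_sub]
    simp only [map_mul, map_natCast]
    ring

theorem narayanaA_comp_X_sq (m : ℕ) :
    (narayanaA m).comp (X ^ 2) = ∑ j ∈ range (m + 1),
      C ((m.choose j : ℚ) * catalan (j + 1)) * (-X) ^ j * (1 + X) ^ (2 * m - 2 * j) := by
  have hm : C ((m : ℚ) + 1) ≠ 0 := C_ne_zero.mpr (by positivity)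
  refine mul_left_cancel₀ hm ?_
  calc _ = ∑ k ∈ range (m + 1),
        ((m + 1).choose k * (m + 1).choose (m - k) : ℚ[X]) * ((X : ℚ[X]) ^ 2) ^ k := by
        rw [narayanaA, Polynomial.sum_comp, mul_sum]
        refine sum_congr rfl fun k hk => ?_
        rw [Nat.choose_symm_of_eq_add (show m + 1 = m - k + (k + 1) by have := mem_range.mp hk; omega)]
        simp only [mul_comp, C_comp, X_pow_comp, ← C_eq_natCast, ← map_mul, ← mul_assoc]
        field_simp
    _ = _ := by
      rw [sum_choose_mul_choose_mul_sq_pow, sum_range_succ', mul_sum, if_neg (by omega), add_zero]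
      refine sum_congr rfl fun j hj => ?_
      have hj : j ≤ m := Nat.le_of_lt_succ (mem_range.mp hj)
      rw [if_pos (by omega), show m - (m + 1 - (j + 1)) = j by omega,
        show 2 * (m + 1 - (j + 1)) = 2 * m - 2 * j by omega]
      have h := congrArg (Nat.cast : ℕ → ℚ[X]) (choose_succ_succ_mul_choose_eq_mul_catalan m j)
      push_cast at h
      simp only [map_mul, map_add, map_natCast, map_one]
      linear_combination (-X) ^ j * (1 + X) ^ (2 * m - 2 * j) * h

theorem C_mul_X_sq_mul_narayanaA_comp_X_sq (n : ℕ) (hn : 2 ≤ n) :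
    C (n : ℚ) * X ^ 2 * (narayanaA (n - 2)).comp (X ^ 2) = ∑ i ∈ range (n + 1),
      C (if 2 ≤ i then (n : ℚ) * catalan (i - 1) * (n - 2).choose (i - 2) else 0) *
        (-X) ^ i * (1 + X) ^ (2 * n - 2 * i) := by
  obtain ⟨m, rfl⟩ : ∃ m, n = m + 2 := ⟨n - 2, by omega⟩
  rw [Nat.add_sub_cancel, narayanaA_comp_X_sq, mul_sum, sum_range_succ' _ (m + 2),
    sum_range_succ' _ (m + 1)]
  simp only [if_neg (by omega : ¬ 2 ≤ 0), if_neg (by omega : ¬ 2 ≤ 0 + 1), map_zero, zero_mul, add_zero]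
  refine sum_congr rfl fun j _ => ?_
  rw [if_pos (by omega), show 2 * (m + 2) - 2 * (j + 1 + 1) = 2 * m - 2 * j by omega,
    Nat.add_sub_cancel, show j + 1 + 1 - 2 = j by omega]
  simp only [map_mul, map_natCast]
  ring

theorem narayanaD_comp_X_sq (n : ℕ) (hn : 2 ≤ n) :
    (narayanaD n).comp (X ^ 2) = ∑ i ∈ range (n + 1),
      C (coefD n i) * (-X) ^ i * (1 + X) ^ (2 * n - 2 * i) := by
  rw [narayanaD, sub_comp, mul_comp, mul_comp, C_comp, X_comp, narayanaB_comp_X_sq,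
    C_mul_X_sq_mul_narayanaA_comp_X_sq n hn, ← sum_sub_distrib]
  refine sum_congr rfl fun i _ => ?_
  rw [coefD, map_sub]
  ring

theorem add_two_mul_catalan_succ_mul_choose_le {m a : ℕ} (h : a ≤ m) :
    (m + 2) * catalan (a + 1) * m.choose a ≤
      (m + 2).choose (a + 2) * (2 * (a + 2)).choose (a + 2) := by
  have hchoose : (m + 1) * ((m + 2) * m.choose a) = (a + 1) * ((a + 2) * (m + 2).choose (a + 2)) := by
    linear_combination (m + 2) * Nat.add_one_mul_choose_eq m a +
      (a + 1) * Nat.add_one_mul_choose_eq (m + 1) (a + 1)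
  refine Nat.le_of_mul_le_mul_left ?_ (Nat.succ_pos m)
  calc (m + 1) * ((m + 2) * catalan (a + 1) * m.choose a)
      = (a + 1) * ((m + 2).choose (a + 2) * (a + 1).centralBinom) := by
        rw [← succ_mul_catalan_eq_centralBinom]
        linear_combination catalan (a + 1) * hchoose
    _ ≤ (m + 1) * ((m + 2).choose (a + 2) * (a + 2).centralBinom) := by
        gcongr
        exact (Nat.centralBinom_strictMono (lt_add_one _)).le
    _ = _ := by rw [Nat.centralBinom_eq_two_mul_choose]

theorem coefD_nonneg {n i : ℕ} (hi : 1 ≤ i) (hin : i ≤ n) : 0 ≤ coefD n i := by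
  rw [coefD]
  split_ifs with h2
  · obtain ⟨a, rfl⟩ : ∃ a, i = a + 2 := ⟨i - 2, by omega⟩
    obtain ⟨m, rfl⟩ : ∃ m, n = m + 2 := ⟨n - 2, by omega⟩
    rw [sub_nonneg, show a + 2 - 1 = a + 1 by omega, Nat.add_sub_cancel, Nat.add_sub_cancel]
    exact_mod_cast add_two_mul_catalan_succ_mul_choose_le (by omega : a ≤ m)
  · rw [sub_zero]
    positivity

theorem stmt16 (n : ℕ) (hn : 2 ≤ n) :
    ((narayanaD n).comp (X ^ 2) =
      (1 + X) ^ (2 * n) +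
        ∑ i ∈ Finset.Icc 1 n, C (coefD n i) * (-X) ^ i * (1 + X) ^ (2 * n - 2 * i)) ∧
    ∀ i ∈ Finset.Icc 1 n, 0 ≤ coefD n i := by
  refine ⟨?_, fun i hi => coefD_nonneg (mem_Icc.mp hi).1 (mem_Icc.mp hi).2⟩
  rw [narayanaD_comp_X_sq n hn, range_eq_Ico, sum_eq_sum_Ico_succ_bot (by omega : 0 < n + 1),
    zero_add, Ico_add_one_right_eq_Icc]
  simp [coefD]
end

section
/- For every n >= 1, d/dx ( x N(A_n, x) ) = N(B_n, x) + n x N(A_{n-1}, x), and d/dx ( N(B_n,x) + n x N(A_{n-1},x) ) = n(n+1) N(A_{n-1},x). -/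
/-! Writing the coefficients of `N(A_n, x)` as `C(n,k) C(n+1,k) / (k+1)`, the coefficient of
`x^k` in `(x N(A_n, x))'` is `C(n,k) C(n+1,k)`. Both identities then reduce, coefficientwise,
to Pascal's rule and the absorption identity `(k+1) C(n+1,k+1) = (n+1) C(n,k)`; by the first,
the second is `(x N(A_n, x))'' = n(n+1) N(A_{n-1}, x)`. -/

open Polynomial Finset

theorem Polynomial.coeff_sum_range_C_mul_X_pow {R : Type*} [Semiring R] (f : ℕ → R) (n k : ℕ)
    (hf : ∀ i, n < i → f i = 0) : (∑ i ∈ range (n + 1), C (f i) * X ^ i).coeff k = f k := by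
  simp only [finsetSum_coeff, coeff_C_mul_X_pow, sum_ite_eq, mem_range]
  split_ifs with hk
  · rfl
  · exact (hf k (by omega)).symm

theorem Nat.cast_add_one_mul_choose {R : Type*} [Semiring R] (n k : ℕ) :
    ((n : R) + 1) * n.choose k = (n + 1).choose (k + 1) * ((k : R) + 1) := by
  exact_mod_cast congrArg (Nat.cast : ℕ → R) (Nat.add_one_mul_choose_eq n k)

theorem coeff_narayanaA (n k : ℕ) :
    (narayanaA n).coeff k = n.choose k * (n + 1).choose k / ((k : ℚ) + 1) := by
  rw [narayanaA, coeff_sum_range_C_mul_X_pow]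
  · have := Nat.cast_add_one_mul_choose (R := ℚ) n k
    field_simp
    linear_combination ((n + 1).choose k : ℚ) * this.symm
  · intro i hi
    simp [Nat.choose_eq_zero_of_lt (by omega : n + 1 < i + 1)]

theorem coeff_narayanaB (n k : ℕ) : (narayanaB n).coeff k = (n.choose k : ℚ) ^ 2 := by
  rw [narayanaB, coeff_sum_range_C_mul_X_pow]
  intro i hi
  simp [Nat.choose_eq_zero_of_lt hi]

theorem coeff_derivative_X_mul_narayanaA (n k : ℕ) :
    (derivative (X * narayanaA n)).coeff k = (n.choose k : ℚ) * (n + 1).choose k := by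
  rw [coeff_derivative, coeff_X_mul, coeff_narayanaA]
  field_simp

theorem derivative_X_mul_narayanaA_succ (m : ℕ) :
    derivative (X * narayanaA (m + 1)) =
      narayanaB (m + 1) + C ((m : ℚ) + 1) * X * narayanaA m := by
  ext k
  rw [coeff_derivative_X_mul_narayanaA, coeff_add, coeff_narayanaB, mul_assoc, coeff_C_mul]
  cases k with
  | zero => simp
  | succ j =>
    rw [coeff_X_mul, coeff_narayanaA, Nat.choose_succ_succ' (m + 1)]
    have := Nat.cast_add_one_mul_choose (R := ℚ) m j
    push_cast
    field_simp
    linear_combination -((m + 1).choose j : ℚ) * this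

theorem derivative_derivative_X_mul_narayanaA_succ (m : ℕ) :
    derivative (derivative (X * narayanaA (m + 1))) =
      C (((m : ℚ) + 1) * ((m : ℚ) + 2)) * narayanaA m := by
  ext k
  rw [coeff_derivative, coeff_derivative_X_mul_narayanaA, coeff_C_mul, coeff_narayanaA]
  have h₁ := Nat.cast_add_one_mul_choose (R := ℚ) m k
  have h₂ := Nat.cast_add_one_mul_choose (R := ℚ) (m + 1) k
  push_cast at h₁ h₂ ⊢
  field_simp
  linear_combination -((m + 2 : ℚ) * (m + 1).choose k) * h₁ -
    ((m + 1).choose (k + 1) : ℚ) * ((k : ℚ) + 1) * h₂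

theorem stmt18_general (n : ℕ) :
    derivative (X * narayanaA n) = narayanaB n + C (n : ℚ) * X * narayanaA (n - 1) ∧
    derivative (narayanaB n + C (n : ℚ) * X * narayanaA (n - 1)) =
      C ((n : ℚ) * ((n : ℚ) + 1)) * narayanaA (n - 1) := by
  cases n with
  | zero => simp [narayanaA, narayanaB]
  | succ m =>
    have h := derivative_X_mul_narayanaA_succ m
    push_cast
    refine ⟨h, ?_⟩
    rw [← h, derivative_derivative_X_mul_narayanaA_succ]
    ring_nf

theorem stmt18 (n : ℕ) (hn : 1 ≤ n) :
    derivative (X * narayanaA n) = narayanaB n + C (n : ℚ) * X * narayanaA (n - 1) ∧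
    derivative (narayanaB n + C (n : ℚ) * X * narayanaA (n - 1)) =
      C ((n : ℚ) * ((n : ℚ) + 1)) * narayanaA (n - 1) :=
  stmt18_general n
end
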